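/- arXiv:1503.06509 — 2 statements merged into one kernel-verified Lean document; each statement's English description precedes it below -/
import Mathlib

section
/- If S is a locally maximal product-free set of size 3 in a finite group G and the subgroup ⟨S⟩ generated by S is cyclic, then |⟨S⟩| ≤ 22. -/
open scoped Pointwise

def productFree {G : Type*} [Group G] (S : Set G) : Prop :=
  ∀ a ∈ S, ∀ b ∈ S, a * b ∉ S

def locallyMaximalPF {G : Type*} [Group G] (S : Set G) : Prop :=
  productFree S ∧ ∀ T : Set G, productFree T → S ⊆ T → T = S

/-!
If g lies outside S ∪ S² ∪ SS⁻¹ ∪ S⁻¹S ∪ {g | g² ∈ S}, then S ∪ {g} is still product-free,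
so local maximality puts every element into this union. Local maximality passes to subgroups
containing S, so we may work in ⟨S⟩, which is cyclic and hence abelian. There |S²| ≤ 6,
S⁻¹S = SS⁻¹ has at most 1 + 6 elements, and each element of S has at most two square roots,
giving |⟨S⟩| ≤ 3 + 6 + 7 + 6 = 22.
-/

open Finset

namespace Finset

variable {α : Type*} [DecidableEq α]

theorem card_mul_self_le_choose [CommMonoid α] (s : Finset α) :
    #(s * s) ≤ (#s + 1).choose 2 := by
  have hsub : s * s ⊆ s.sym2.image (Sym2.lift ⟨(· * ·), mul_comm⟩) := by
    intro z hz
    obtain ⟨x, hx, y, hy, rfl⟩ := mem_mul.1 hz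
    exact mem_image.2 ⟨s(x, y), mk_mem_sym2_iff.2 ⟨hx, hy⟩, rfl⟩
  calc #(s * s) ≤ #(s.sym2.image _) := card_le_card hsub
    _ ≤ #s.sym2 := card_image_le
    _ = (#s + 1).choose 2 := card_sym2 s

theorem card_mul_inv_self_le [Group α] (s : Finset α) :
    #(s * s⁻¹) ≤ #s * #s - #s + 1 := by
  have hsub : s * s⁻¹ ⊆ insert 1 (s.offDiag.image fun p => p.1 * p.2⁻¹) := by
    intro z hz
    obtain ⟨x, hx, y, hy, rfl⟩ := mem_mul.1 hz
    rw [mem_inv'] at hy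
    by_cases hxy : x = y⁻¹
    · simp [hxy]
    · exact mem_insert_of_mem (mem_image.2 ⟨(x, y⁻¹), mem_offDiag.2 ⟨hx, hy, hxy⟩, by simp⟩)
  calc #(s * s⁻¹) ≤ #(insert 1 (s.offDiag.image _)) := card_le_card hsub
    _ ≤ #(s.offDiag.image _) + 1 := card_insert_le _ _
    _ ≤ #s.offDiag + 1 := by gcongr; exact card_image_le
    _ = #s * #s - #s + 1 := by rw [offDiag_card]

end Finset

section Cyclic

variable {G : Type*} [CommGroup G] [IsCyclic G] [Fintype G] [DecidableEq G]

theorem IsCyclic.card_mul_self_eq_le (s : G) : #{g | g * g = s} ≤ 2 := by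
  obtain ⟨y, hy⟩ | hempty := ({g | g * g = s} : Finset G).eq_empty_or_nonempty.symm
  · calc #{g | g * g = s} ≤ #{z : G | z ^ 2 = 1} := by
          refine card_le_card_of_injOn (y⁻¹ * ·) (fun g hg => ?_) (fun _ _ _ _ => mul_left_cancel)
          simp only [coe_filter, mem_filter, mem_univ, true_and, Set.mem_ofPred_eq] at hg hy ⊢
          rw [pow_two, mul_mul_mul_comm, ← mul_inv, hy, hg, inv_mul_cancel]
      _ ≤ 2 := IsCyclic.card_pow_eq_one_le two_pos
  · simp [hempty]

theorem IsCyclic.card_mul_self_mem_le (S : Finset G) : #{g | g * g ∈ S} ≤ 2 * #S :=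
  card_le_mul_card_image_of_maps_to (fun g hg => (mem_filter.1 hg).2) 2
    fun s _ => by
      rw [filter_filter]
      exact (card_le_card fun g hg => by simp_all).trans
        (IsCyclic.card_mul_self_eq_le s)

end Cyclic

section ProductFree

variable {G : Type*} [Group G] {S : Set G}

theorem productFree.one_notMem (hS : productFree S) : (1 : G) ∉ S :=
  fun h1 => hS 1 h1 1 h1 (by rwa [one_mul])

theorem productFree.insert {g : G} (hS : productFree S) (hg1 : g ≠ 1) (hgg : g * g ∉ S)
    (hSS : g ∉ S * S) (hSSinv : g ∉ S * S⁻¹) (hSinvS : g ∉ S⁻¹ * S) :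
    productFree (insert g S) := by
  have h1 := hS.one_notMem
  rintro x (rfl | hx) y (rfl | hy) (hxy | hxy)
  · exact hg1 (mul_eq_left.1 hxy)
  · exact hgg hxy
  · exact h1 (mul_eq_left.1 hxy ▸ hy)
  · exact hSSinv ⟨_, hxy, y⁻¹, Set.inv_mem_inv.2 hy, by group⟩
  · exact h1 (mul_eq_right.1 hxy ▸ hx)
  · exact hSinvS ⟨x⁻¹, Set.inv_mem_inv.2 hx, _, hxy, by group⟩
  · exact hSS ⟨x, hx, y, hy, hxy⟩
  · exact hS x hx y hy hxy

theorem productFree.image {H : Type*} [Group H] {f : H →* G} (hf : Function.Injective f)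
    {T : Set H} (hT : productFree T) : productFree (f '' T) := by
  rintro _ ⟨a, ha, rfl⟩ _ ⟨b, hb, rfl⟩ ⟨c, hc, hcab⟩
  rw [← map_mul] at hcab
  exact hT a ha b hb (hf hcab ▸ hc)

theorem locallyMaximalPF.mem_cover (h : locallyMaximalPF S) (hne : S.Nonempty) (g : G) :
    g ∈ S ∨ g * g ∈ S ∨ g ∈ S * S ∨ g ∈ S * S⁻¹ ∨ g ∈ S⁻¹ * S := by
  by_contra! hg
  obtain ⟨hgS, hgg, hSS, hSSinv, hSinvS⟩ := hg
  have hg1 : g ≠ 1 := by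
    obtain ⟨a, ha⟩ := hne
    rintro rfl
    exact hSSinv ⟨a, ha, a⁻¹, Set.inv_mem_inv.2 ha, mul_inv_cancel a⟩
  have := h.2 _ (h.1.insert hg1 hgg hSS hSSinv hSinvS) (Set.subset_insert g S)
  exact hgS (this ▸ Set.mem_insert g S)

theorem locallyMaximalPF.comap_subtype {K : Subgroup G} (h : locallyMaximalPF S)
    (hSK : S ⊆ K) : locallyMaximalPF ((↑) ⁻¹' S : Set K) := by
  refine ⟨fun a ha b hb => h.1 a ha b hb, fun T hT hST => ?_⟩
  have himage : K.subtype '' T = S :=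
    h.2 _ (hT.image K.subtype_injective) fun s hs => ⟨⟨s, hSK hs⟩, hST hs, rfl⟩
  rw [← himage]
  exact (Set.preimage_image_eq T K.subtype_injective).symm

end ProductFree

theorem locallyMaximalPF.card_le_of_isCyclic {G : Type*} [CommGroup G] [IsCyclic G] [Fintype G]
    [DecidableEq G] {S : Finset G} (h : locallyMaximalPF (S : Set G)) (hne : S.Nonempty) :
    Fintype.card G ≤ #S + (#S + 1).choose 2 + (#S * #S - #S + 1) + 2 * #S := by
  have hcover : (univ : Finset G) ⊆ S ∪ S * S ∪ S * S⁻¹ ∪ ({g | g * g ∈ S} : Finset G) := by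
    intro g _
    have := h.mem_cover hne g
    rw [mul_comm (S : Set G)⁻¹, ← coe_inv, ← coe_mul, ← coe_mul] at this
    simp only [mem_union, mem_filter, mem_univ, true_and, mem_coe] at this ⊢
    tauto
  calc Fintype.card G = #(univ : Finset G) := card_univ.symm
    _ ≤ #(S ∪ S * S ∪ S * S⁻¹ ∪ ({g | g * g ∈ S} : Finset G)) := card_le_card hcover
    _ ≤ #S + #(S * S) + #(S * S⁻¹) + #({g | g * g ∈ S} : Finset G) := by
      grw [card_union_le, card_union_le, card_union_le]
    _ ≤ _ := by
      grw [card_mul_self_le_choose, card_mul_inv_self_le, IsCyclic.card_mul_self_mem_le]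

theorem stmt5_general {G : Type*} [Group G] (S : Set G) (hcard : S.ncard = 3)
    (h : locallyMaximalPF S) (hcyc : IsCyclic (Subgroup.closure S)) :
    Nat.card (Subgroup.closure S) ≤ 22 := by
  set H := Subgroup.closure S
  cases finite_or_infinite H
  · let : CommGroup H := hcyc.commGroup
    let : Fintype H := Fintype.ofFinite H
    classical
    set S' : Finset H := ((↑) ⁻¹' S : Set H).toFinset
    have hS' : #S' = 3 := by
      rw [← Set.ncard_eq_toFinset_card', Set.ncard_preimage_of_injective_subset_range
        Subtype.val_injective (by rw [Subtype.range_coe]; exact Subgroup.subset_closure), hcard]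
    have hmax : locallyMaximalPF (S' : Set H) := by
      simpa [S'] using h.comap_subtype Subgroup.subset_closure
    have := hmax.card_le_of_isCyclic (card_pos.1 (by omega))
    rw [hS'] at this
    rw [Nat.card_eq_fintype_card]
    simpa [Nat.choose] using this
  · simp -- `Nat.card` of an infinite type is `0`

theorem stmt5 {G : Type*} [Group G] [Fintype G] (S : Set G) (hcard : S.ncard = 3)
    (h : locallyMaximalPF S) (hcyc : IsCyclic (Subgroup.closure S)) :
    Nat.card (Subgroup.closure S) ≤ 22 :=
  stmt5_general S hcard h hcyc
end

section
/- In the dihedral group D₆ of order 6, the set of the three reflections {h, gh, g²h} is a locally maximal product-free set, and it is the unique locally maximal product-free set of size 3 in D₆. -/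
open scoped Pointwise

/-!
A product of two reflections is a rotation, so the reflections form a product-free set; it is
maximal because `r i * sr 0` is again a reflection. Conversely, if `S` is product-free and
`|S| = |G| / 2`, then for `x ∈ S` the translate `x • S` is disjoint from `S`, hence is its
complement and contains `1`; so `x⁻¹ ∈ S`. An `x ∈ S` with `x ^ 3 = 1` would then give
`x * x = x⁻¹ ∈ S`. Since every rotation of `D₆` has order dividing 3, a product-free set of
size 3 consists of reflections only.
-/

namespace productFree

variable {G : Type*} [Group G] {S : Set G}

theorem one_notMem_s10 (hS : productFree S) : (1 : G) ∉ S :=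
  fun h => hS 1 h 1 h (by simpa using h)

theorem inv_mem [Finite G] (hS : productFree S) (hcard : Nat.card G = 2 * S.ncard) {x : G}
    (hx : x ∈ S) : x⁻¹ ∈ S := by
  have hdisj : Disjoint S (x • S) := by
    rw [Set.disjoint_right]
    rintro _ ⟨s, hs, rfl⟩
    exact hS x hx s hs
  have hunion : S ∪ x • S = Set.univ := by
    refine Set.eq_of_subset_of_ncard_le (Set.subset_univ _) ?_
    rw [Set.ncard_union_eq hdisj, Set.ncard_smul_set, Set.ncard_univ, hcard, two_mul]
  have hone : (1 : G) ∈ x • S :=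
    (Set.mem_union _ _ _).1 (hunion ▸ Set.mem_univ 1) |>.resolve_left hS.one_notMem_s10
  obtain ⟨s, hs, hxs⟩ := hone
  rwa [← eq_inv_of_mul_eq_one_right hxs]

theorem pow_three_ne_one [Finite G] (hS : productFree S) (hcard : Nat.card G = 2 * S.ncard)
    {x : G} (hx : x ∈ S) : x ^ 3 ≠ 1 := by
  intro h3
  have hinv : x⁻¹ = x * x :=
    inv_eq_of_mul_eq_one_right (by rw [← mul_assoc, ← pow_three', h3])
  exact hS x hx x hx (hinv ▸ hS.inv_mem hcard hx)

end productFree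

namespace DihedralGroup

theorem locallyMaximalPF_range_sr (n : ℕ) :
    locallyMaximalPF (Set.range (sr : ZMod n → DihedralGroup n)) := by
  refine ⟨?_, fun T hT hsub => le_antisymm ?_ hsub⟩
  · rintro _ ⟨i, rfl⟩ _ ⟨j, rfl⟩ ⟨k, hk⟩
    rw [sr_mul_sr] at hk
    cases hk
  · rintro (i | i) hi
    · have hprod := hT (r i) hi (sr 0) (hsub ⟨0, rfl⟩)
      rw [r_mul_sr, zero_sub] at hprod
      exact absurd (hsub ⟨-i, rfl⟩) hprod
    · exact ⟨i, rfl⟩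

theorem eq_range_sr_of_productFree {S : Set (DihedralGroup 3)} (hS : productFree S)
    (hcard : S.ncard = 3) : S = Set.range sr := by
  have hhalf : Nat.card (DihedralGroup 3) = 2 * S.ncard := by rw [nat_card, hcard]
  have hsub : S ⊆ Set.range sr := by
    rintro (i | i) hi
    · have hcube : r i ^ 3 = 1 := by rw [r_pow, ZMod.natCast_self, mul_zero, r_zero]
      exact absurd hcube (hS.pow_three_ne_one hhalf hi)
    · exact ⟨i, rfl⟩
  refine Set.eq_of_subset_of_ncard_le hsub ?_
  rw [Set.ncard_range_of_injective fun _ _ => sr.inj, Nat.card_zmod, hcard]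

end DihedralGroup

open DihedralGroup in
theorem stmt10 :
    locallyMaximalPF ({DihedralGroup.sr 0, DihedralGroup.sr 1, DihedralGroup.sr 2} :
      Set (DihedralGroup 3)) ∧
    ∀ S : Set (DihedralGroup 3), locallyMaximalPF S → S.ncard = 3 →
      S = {DihedralGroup.sr 0, DihedralGroup.sr 1, DihedralGroup.sr 2} := by
  have hrange : ({sr 0, sr 1, sr 2} : Set (DihedralGroup 3)) = Set.range sr := by
    ext x
    simp only [Set.mem_insert_iff, Set.mem_singleton_iff, Set.mem_range]
    constructor
    · rintro (rfl | rfl | rfl) <;> exact ⟨_, rfl⟩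
    · rintro ⟨i, rfl⟩
      fin_cases i <;> decide
  rw [hrange]
  exact ⟨locallyMaximalPF_range_sr 3, fun S hS hcard => eq_range_sr_of_productFree hS.1 hcard⟩
end
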